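/- arXiv:1202.0030 — 5 statements merged into one kernel-verified Lean document; each statement's English description precedes it below -/
import Mathlib

section
/- Let E be a real Hilbert space (a complete real inner product space), f : E → ℝ a C² function, x ∈ E, ε ≥ 0 and μ > 0. Suppose that ‖iteratedFDeriv ℝ 2 f z‖ ≤ μ for every z in the segment from x to x − ε • ∇f(x), where ∇f denotes the gradient of f. Then f(x − ε • ∇f(x)) ≤ f(x) − (ε − (μ/2)·ε²)·‖∇f(x)‖². In particular, if 0 < ε < 2/μ, then f(x − ε • ∇f(x)) ≤ f(x), with equality only if ∇f(x) = 0. -/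
/-!
Along the segment `t ↦ x + t • (y - x)` the second derivative of `f` is at most `μ ‖y - x‖²`,
so `f` minus the parabola `μ/2 ‖y - x‖² t²` is concave and lies below its tangent at `t = 0`:
`f y ≤ f x + Df(x)(y - x) + μ/2 ‖y - x‖²`. For the gradient step `y = x - ε ∇f(x)` the linear
term is `-ε ‖∇f(x)‖²` and the quadratic one `μ/2 ε² ‖∇f(x)‖²`.
-/

open Set

theorem image_le_add_deriv_mul_add_of_deriv2_le {g g' g'' : ℝ → ℝ} {a b M : ℝ} (hab : a ≤ b)
    (hg : ∀ t, HasDerivAt g (g' t) t) (hg' : ∀ t, HasDerivAt g' (g'' t) t)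
    (hM : ∀ t ∈ Icc a b, g'' t ≤ M) :
    g b ≤ g a + g' a * (b - a) + M / 2 * (b - a) ^ 2 := by
  rcases hab.eq_or_lt with rfl | hab
  · simp
  set k : ℝ → ℝ := fun t ↦ g t - M / 2 * (t - a) ^ 2
  have hk : ∀ t, HasDerivAt k (g' t - M * (t - a)) t := fun t ↦
    ((hg t).sub ((((hasDerivAt_id' t).sub_const a).pow 2).const_mul (M / 2))).congr_deriv
      (by ring)
  have hk' : ∀ t, HasDerivAt (fun t ↦ g' t - M * (t - a)) (g'' t - M) t := fun t ↦
    ((hg' t).sub (((hasDerivAt_id' t).sub_const a).const_mul M)).congr_deriv (by ring)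
  have hconc : ConcaveOn ℝ (Icc a b) k :=
    concaveOn_of_hasDerivWithinAt2_nonpos (convex_Icc a b)
      (fun t _ ↦ (hk t).continuousAt.continuousWithinAt) (fun t _ ↦ (hk t).hasDerivWithinAt)
      (fun t _ ↦ (hk' t).hasDerivWithinAt)
      (fun t ht ↦ sub_nonpos.2 (hM t (interior_subset ht)))
  have hslope := hconc.slope_le_of_hasDerivAt (left_mem_Icc.2 hab.le) (right_mem_Icc.2 hab.le)
    hab (hk a)
  rw [slope_def_field, div_le_iff₀ (sub_pos.2 hab)] at hslope
  simp only [k, sub_self] at hslope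
  nlinarith

theorem fderiv_fderiv_apply_le_norm_iteratedFDeriv_two_mul {E : Type*} [NormedAddCommGroup E]
    [NormedSpace ℝ E] (f : E → ℝ) (z v : E) :
    fderiv ℝ (fderiv ℝ f) z v v ≤ ‖iteratedFDeriv ℝ 2 f z‖ * ‖v‖ ^ 2 := by
  have hnorm : ‖fderiv ℝ (fderiv ℝ f) z‖ = ‖iteratedFDeriv ℝ 2 f z‖ := by
    rw [← norm_iteratedFDeriv_one, norm_iteratedFDeriv_fderiv]
  calc fderiv ℝ (fderiv ℝ f) z v v ≤ ‖fderiv ℝ (fderiv ℝ f) z v v‖ := Real.le_norm_self _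
    _ ≤ ‖fderiv ℝ (fderiv ℝ f) z‖ * ‖v‖ * ‖v‖ := (fderiv ℝ (fderiv ℝ f) z).le_opNorm₂ v v
    _ = ‖iteratedFDeriv ℝ 2 f z‖ * ‖v‖ ^ 2 := by rw [hnorm]; ring

theorem ContDiff.image_le_add_fderiv_add_of_norm_iteratedFDeriv_two_le {E : Type*}
    [NormedAddCommGroup E] [NormedSpace ℝ E] {f : E → ℝ} (hf : ContDiff ℝ 2 f) {x y : E} {μ : ℝ}
    (hbound : ∀ z ∈ segment ℝ x y, ‖iteratedFDeriv ℝ 2 f z‖ ≤ μ) :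
    f y ≤ f x + fderiv ℝ f x (y - x) + μ / 2 * ‖y - x‖ ^ 2 := by
  set v := y - x
  have hline : ∀ t : ℝ, HasDerivAt (fun s : ℝ ↦ x + s • v) v t := fun t ↦ by
    simpa using ((hasDerivAt_id t).smul_const v).const_add x
  have hdf : Differentiable ℝ (fderiv ℝ f) :=
    (hf.fderiv_right (m := 1) le_rfl).differentiable one_ne_zero
  have hg : ∀ t : ℝ, HasDerivAt (fun s ↦ f (x + s • v)) (fderiv ℝ f (x + t • v) v) t := fun t ↦
    ((hf.differentiable two_ne_zero _).hasFDerivAt).comp_hasDerivAt t (hline t)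
  have hg' : ∀ t : ℝ, HasDerivAt (fun s ↦ fderiv ℝ f (x + s • v) v)
      (fderiv ℝ (fderiv ℝ f) (x + t • v) v v) t := fun t ↦
    (((hdf _).hasFDerivAt.clm_apply (hasFDerivAt_const v _)).comp_hasDerivAt t
      (hline t)).congr_deriv (by simp)
  have hM : ∀ t ∈ Icc (0 : ℝ) 1, fderiv ℝ (fderiv ℝ f) (x + t • v) v v ≤ μ * ‖v‖ ^ 2 := by
    intro t ht
    have hz : x + t • v ∈ segment ℝ x y := by
      rw [segment_eq_image']
      exact ⟨t, ht, rfl⟩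
    exact (fderiv_fderiv_apply_le_norm_iteratedFDeriv_two_mul f _ v).trans
      (mul_le_mul_of_nonneg_right (hbound _ hz) (sq_nonneg _))
  have := image_le_add_deriv_mul_add_of_deriv2_le zero_le_one hg hg' hM
  simp only [zero_smul, add_zero, one_smul, add_sub_cancel, sub_zero, mul_one, one_pow, v] at this
  linarith

theorem stmt_2_general {E : Type*} [NormedAddCommGroup E] [InnerProductSpace ℝ E] [CompleteSpace E]
    (f : E → ℝ) (hf : ContDiff ℝ 2 f) (x : E) (ε μ : ℝ)
    (hbound : ∀ z ∈ segment ℝ x (x - ε • gradient f x), ‖iteratedFDeriv ℝ 2 f z‖ ≤ μ) :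
    f (x - ε • gradient f x) ≤ f x - (ε - μ / 2 * ε ^ 2) * ‖gradient f x‖ ^ 2 ∧
      (0 < ε → ε < 2 / μ →
        f (x - ε • gradient f x) ≤ f x ∧
          (f (x - ε • gradient f x) = f x → gradient f x = 0)) := by
  set g := gradient f x
  have hdescent : f (x - ε • g) ≤ f x - (ε - μ / 2 * ε ^ 2) * ‖g‖ ^ 2 := by
    have htaylor := hf.image_le_add_fderiv_add_of_norm_iteratedFDeriv_two_le hbound
    have hlin : fderiv ℝ f x (x - ε • g - x) = -(ε * ‖g‖ ^ 2) := by
      rw [sub_sub_cancel_left, map_neg, map_smul, ← inner_gradient_left,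
        real_inner_self_eq_norm_sq, smul_eq_mul]
    have hsq : ‖x - ε • g - x‖ ^ 2 = ε ^ 2 * ‖g‖ ^ 2 := by
      rw [sub_sub_cancel_left, norm_neg, norm_smul, Real.norm_eq_abs, mul_pow, sq_abs]
    rw [hlin, hsq] at htaylor
    linarith
  refine ⟨hdescent, fun hε hεμ => ?_⟩
  have hμε : μ * ε < 2 := by
    rcases le_or_gt μ 0 with hμ | hμ
    · nlinarith
    · exact (lt_div_iff₀' hμ).1 hεμ
  have hrate : 0 < ε - μ / 2 * ε ^ 2 := by nlinarith
  refine ⟨hdescent.trans (sub_le_self _ (by positivity)), fun heq => ?_⟩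
  have hg : ‖g‖ ^ 2 = 0 := by nlinarith [sq_nonneg ‖g‖]
  simpa using hg

theorem stmt_2 {E : Type*} [NormedAddCommGroup E] [InnerProductSpace ℝ E] [CompleteSpace E]
    (f : E → ℝ) (hf : ContDiff ℝ 2 f) (x : E) (ε μ : ℝ) (hε : 0 ≤ ε) (hμ : 0 < μ)
    (hbound : ∀ z ∈ segment ℝ x (x - ε • gradient f x), ‖iteratedFDeriv ℝ 2 f z‖ ≤ μ) :
    f (x - ε • gradient f x) ≤ f x - (ε - μ / 2 * ε ^ 2) * ‖gradient f x‖ ^ 2 ∧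
      (0 < ε → ε < 2 / μ →
        f (x - ε • gradient f x) ≤ f x ∧
          (f (x - ε • gradient f x) = f x → gradient f x = 0)) :=
  stmt_2_general f hf x ε μ hbound
end

section
/- Let E be a real inner product space and let y, w₁, w₂ ∈ E satisfy ‖y‖ = ‖w₁‖ = ‖w₂‖ = 1 and ⟪y, w₁⟫ = ⟪y, w₂⟫ = 0. Let d₁, d₂ ∈ ℝ with 0 < d₂ ≤ d₁ < π/2, and assume it is not the case that both d₁ = d₂ and w₁ = w₂. Define the unit-sphere geodesics γᵢ(t) = cos(dᵢ·t) • y + sin(dᵢ·t) • wᵢ for i = 1, 2. Then the function t ↦ ⟪γ₁(t), γ₂(t)⟫ is strictly decreasing on the interval [0, 1]. -/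
/-!
With `c = ⟪w₁, w₂⟫`, the inner product of the two geodesics is
`cos (d₁ t) cos (d₂ t) + c sin (d₁ t) sin (d₂ t)
  = (1 + c)/2 · cos ((d₁ - d₂) t) + (1 - c)/2 · cos ((d₁ + d₂) t)`,
a combination with nonnegative weights of two cosines whose arguments stay in `[0, π]`
for `t ∈ [0, 1]`, hence antitone. It is strict: either `c < 1` and the second term is strictly
decreasing, or `c = 1`, i.e. `w₁ = w₂`, so `d₁ ≠ d₂` and the first term is.
-/

open Real Set
open scoped RealInnerProductSpace

section ConstMul

variable {α β : Type*} [Preorder α] [Mul β] [Zero β] [Preorder β] {f : α → β} {s : Set α} {a : β}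

theorem AntitoneOn.const_mul_of_nonneg [PosMulMono β] (hf : AntitoneOn f s) (ha : 0 ≤ a) :
    AntitoneOn (fun x => a * f x) s :=
  fun _ hx _ hy hxy => mul_le_mul_of_nonneg_left (hf hx hy hxy) ha

theorem StrictAntiOn.const_mul_of_pos [PosMulStrictMono β] (hf : StrictAntiOn f s) (ha : 0 < a) :
    StrictAntiOn (fun x => a * f x) s :=
  fun _ hx _ hy hxy => mul_lt_mul_of_pos_left (hf hx hy hxy) ha

end ConstMul

theorem Real.mapsTo_mul_Icc_zero_one {k : ℝ} (hk : 0 ≤ k) (hkπ : k ≤ π) :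
    MapsTo (fun t => k * t) (Icc 0 1) (Icc 0 π) :=
  fun _ ⟨ht₀, ht₁⟩ => ⟨mul_nonneg hk ht₀, by nlinarith⟩

theorem Real.antitoneOn_cos_mul {k : ℝ} (hk : 0 ≤ k) (hkπ : k ≤ π) :
    AntitoneOn (fun t => cos (k * t)) (Icc 0 1) :=
  antitoneOn_cos.comp_MonotoneOn (fun _ _ _ _ hst => mul_le_mul_of_nonneg_left hst hk)
    (mapsTo_mul_Icc_zero_one hk hkπ)

theorem Real.strictAntiOn_cos_mul {k : ℝ} (hk : 0 < k) (hkπ : k ≤ π) :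
    StrictAntiOn (fun t => cos (k * t)) (Icc 0 1) :=
  strictAntiOn_cos.comp_strictMonoOn (fun _ _ _ _ hst => mul_lt_mul_of_pos_left hst hk)
    (mapsTo_mul_Icc_zero_one hk.le hkπ)

theorem inner_cos_smul_add_sin_smul {E : Type*} [NormedAddCommGroup E] [InnerProductSpace ℝ E]
    {y w₁ w₂ : E} (hy : ‖y‖ = 1) (hyw₁ : ⟪y, w₁⟫ = 0) (hyw₂ : ⟪y, w₂⟫ = 0) (a b : ℝ) :
    ⟪cos a • y + sin a • w₁, cos b • y + sin b • w₂⟫ =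
      (1 + ⟪w₁, w₂⟫) / 2 * cos (a - b) + (1 - ⟪w₁, w₂⟫) / 2 * cos (a + b) := by
  have hyy : ⟪y, y⟫ = 1 := by rw [real_inner_self_eq_norm_sq, hy, one_pow]
  have hw₁y : ⟪w₁, y⟫ = 0 := by rw [real_inner_comm, hyw₁]
  simp only [inner_add_left, inner_add_right, real_inner_smul_left, real_inner_smul_right,
    hyy, hyw₂, hw₁y, cos_sub, cos_add]
  ring

theorem stmt_5 {E : Type*} [NormedAddCommGroup E] [InnerProductSpace ℝ E]
    (y w₁ w₂ : E) (hy : ‖y‖ = 1) (hw₁ : ‖w₁‖ = 1) (hw₂ : ‖w₂‖ = 1)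
    (hyw₁ : ⟪y, w₁⟫ = 0) (hyw₂ : ⟪y, w₂⟫ = 0)
    (d₁ d₂ : ℝ) (hd₂ : 0 < d₂) (hd₂₁ : d₂ ≤ d₁) (hd₁ : d₁ < π / 2)
    (hne : ¬(d₁ = d₂ ∧ w₁ = w₂)) :
    StrictAntiOn
      (fun t : ℝ =>
        ⟪Real.cos (d₁ * t) • y + Real.sin (d₁ * t) • w₁,
          Real.cos (d₂ * t) • y + Real.sin (d₂ * t) • w₂⟫)
      (Set.Icc (0 : ℝ) 1) := by
  simp only [inner_cos_smul_add_sin_smul hy hyw₁ hyw₂, ← sub_mul, ← add_mul]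
  have hdiff : AntitoneOn (fun t => cos ((d₁ - d₂) * t)) (Icc 0 1) :=
    antitoneOn_cos_mul (by linarith) (by linarith [pi_pos])
  have hsum : StrictAntiOn (fun t => cos ((d₁ + d₂) * t)) (Icc 0 1) :=
    strictAntiOn_cos_mul (by linarith) (by linarith)
  have hc₀ : 0 ≤ 1 + ⟪w₁, w₂⟫ := by linarith [neg_one_le_real_inner_of_norm_eq_one hw₁ hw₂]
  rcases (real_inner_le_one_of_norm_eq_one hw₁ hw₂).lt_or_eq with hc | hc
  · exact (hdiff.const_mul_of_nonneg (by linarith)).add_strictAnti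
      (hsum.const_mul_of_pos (by linarith))
  · have hd : d₂ < d₁ := hd₂₁.lt_of_ne fun h =>
      hne ⟨h.symm, (inner_eq_one_iff_of_norm_eq_one hw₁ hw₂).mp hc⟩
    rw [hc]
    exact ((strictAntiOn_cos_mul (by linarith) (by linarith [pi_pos])).const_mul_of_pos
      (by norm_num)).add_antitone (hsum.antitoneOn.const_mul_of_nonneg (by norm_num))
end

section
/- Let E be a real Hilbert space, f : E → ℝ a C² function with range bounded below, μ > 0 with ‖iteratedFDeriv ℝ 2 f z‖ ≤ μ for all z ∈ E, and ε with 0 < ε < 2/μ. Let x : ℕ → E be the gradient descent sequence x(l+1) = x(l) − ε • ∇f(x(l)) from an arbitrary x(0), where ∇f denotes the gradient of f. Then: (i) the series Σ_l ‖∇f(x(l))‖² converges (the function l ↦ ‖∇f(x(l))‖² is summable); (ii) ∇f(x(l)) → 0 as l → ∞; and (iii) every cluster point y of the sequence (x(l)) satisfies ∇f(y) = 0. -/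
/-! Since `‖D²f‖ ≤ μ` makes `Df` `μ`-Lipschitz, the function
`t ↦ f (a + t v) - t ⟪∇f a, v⟫ - μ t² ‖v‖² / 2` is nonincreasing on `[0, ∞)`, which gives the
descent lemma `f (a + v) ≤ f a + ⟪∇f a, v⟫ + μ/2 ‖v‖²`. For `v = -ε ∇f a` every step therefore
lowers `f` by at least `ε (1 - με/2) ‖∇f a‖²`, a positive multiple of `‖∇f a‖²` because
`ε < 2/μ`. As `f` is bounded below these decrements are summable, so `∇f (x l) → 0`, and
continuity of `∇f` passes this to every cluster point. -/

open Filter Topology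

section Descent

variable {E : Type*} [NormedAddCommGroup E] [NormedSpace ℝ E]

theorem lipschitzWith_fderiv_of_norm_iteratedFDeriv_two_le {F : Type*} [NormedAddCommGroup F]
    [NormedSpace ℝ F] {f : E → F} (hf : ContDiff ℝ 2 f) {C : NNReal}
    (hC : ∀ z, ‖iteratedFDeriv ℝ 2 f z‖ ≤ C) : LipschitzWith C (fderiv ℝ f) := by
  refine lipschitzWith_of_nnnorm_fderiv_le
    ((hf.fderiv_right (m := 1) le_rfl).differentiable one_ne_zero) fun z => ?_
  rw [← NNReal.coe_le_coe, coe_nnnorm]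
  calc ‖fderiv ℝ (fderiv ℝ f) z‖ = ‖iteratedFDeriv ℝ 1 (fderiv ℝ f) z‖ := by
        rw [← norm_iteratedFDeriv_zero (𝕜 := ℝ) (f := fderiv ℝ (fderiv ℝ f)),
          norm_iteratedFDeriv_fderiv]
    _ = ‖iteratedFDeriv ℝ 2 f z‖ := norm_iteratedFDeriv_fderiv
    _ ≤ C := hC z

theorem le_add_fderiv_add_of_lipschitzWith_fderiv {f : E → ℝ} (hf : Differentiable ℝ f)
    {L : NNReal} (hL : LipschitzWith L (fderiv ℝ f)) (a v : E) :
    f (a + v) ≤ f a + fderiv ℝ f a v + L / 2 * ‖v‖ ^ 2 := by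
  set h : ℝ → ℝ := fun t => f (a + t • v) - t * fderiv ℝ f a v - L / 2 * t ^ 2 * ‖v‖ ^ 2
  have hasDerivAt_h : ∀ t, HasDerivAt h
      (fderiv ℝ f (a + t • v) v - fderiv ℝ f a v - L * t * ‖v‖ ^ 2) t := by
    intro t
    have hline : HasDerivAt (fun s : ℝ => a + s • v) v t := by
      simpa using ((hasDerivAt_id t).smul_const v).const_add a
    refine ((((hf _).hasFDerivAt.comp_hasDerivAt t hline).fun_sub
      ((hasDerivAt_id' t).mul_const (fderiv ℝ f a v))).fun_sub
      (((hasDerivAt_pow 2 t).const_mul (L / 2 : ℝ)).mul_const (‖v‖ ^ 2))).congr_deriv ?_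
    push_cast
    ring
  have deriv_nonpos : ∀ t ∈ interior (Set.Ici (0 : ℝ)),
      fderiv ℝ f (a + t • v) v - fderiv ℝ f a v - L * t * ‖v‖ ^ 2 ≤ 0 := by
    intro t ht
    rw [interior_Ici] at ht
    have hdiff : ‖fderiv ℝ f (a + t • v) - fderiv ℝ f a‖ ≤ L * ‖t • v‖ := by
      simpa [dist_eq_norm] using hL.dist_le_mul (a + t • v) a
    rw [sub_nonpos]
    calc fderiv ℝ f (a + t • v) v - fderiv ℝ f a v
        ≤ ‖(fderiv ℝ f (a + t • v) - fderiv ℝ f a) v‖ := by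
          rw [sub_apply]; exact Real.le_norm_self _
      _ ≤ ‖fderiv ℝ f (a + t • v) - fderiv ℝ f a‖ * ‖v‖ := ContinuousLinearMap.le_opNorm _ _
      _ ≤ L * ‖t • v‖ * ‖v‖ := by gcongr
      _ = L * t * ‖v‖ ^ 2 := by
          rw [norm_smul, Real.norm_of_nonneg (le_of_lt ht)]; ring
  have h_antitone : AntitoneOn h (Set.Ici 0) :=
    antitoneOn_of_hasDerivWithinAt_nonpos (convex_Ici 0)
      (fun t _ => (hasDerivAt_h t).continuousAt.continuousWithinAt)
      (fun t _ => (hasDerivAt_h t).hasDerivWithinAt) deriv_nonpos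
  have h_one_le_h_zero : h 1 ≤ h 0 :=
    h_antitone Set.self_mem_Ici (Set.mem_Ici.2 zero_le_one) zero_le_one
  norm_num [h] at h_one_le_h_zero
  linarith

end Descent

section GradientDescent

variable {E : Type*} [NormedAddCommGroup E] [InnerProductSpace ℝ E] [CompleteSpace E]

theorem le_sub_mul_norm_sq_gradient_of_lipschitzWith_fderiv {f : E → ℝ}
    (hf : Differentiable ℝ f) {L : NNReal} (hL : LipschitzWith L (fderiv ℝ f)) (a : E) (ε : ℝ) :
    f (a - ε • gradient f a) ≤ f a - ε * (1 - L * ε / 2) * ‖gradient f a‖ ^ 2 := by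
  have h := le_add_fderiv_add_of_lipschitzWith_fderiv hf hL a (-(ε • gradient f a))
  rw [← sub_eq_add_neg, ← inner_gradient_left, inner_neg_right, real_inner_smul_right,
    real_inner_self_eq_norm_sq, norm_neg, norm_smul, mul_pow, Real.norm_eq_abs, sq_abs] at h
  linarith

theorem ContDiff.continuous_gradient {f : E → ℝ} {n : WithTop ℕ∞} (hf : ContDiff ℝ n f)
    (hn : n ≠ 0) : Continuous (gradient f) :=
  (InnerProductSpace.toDual ℝ E).symm.continuous.comp (hf.continuous_fderiv hn)

end GradientDescent

theorem summable_of_le_sub_succ_of_bddBelow {a u : ℕ → ℝ} (ha : ∀ l, 0 ≤ a l)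
    (hu : BddBelow (Set.range u)) (hdecr : ∀ l, a l ≤ u l - u (l + 1)) : Summable a := by
  obtain ⟨B, hB⟩ := hu
  refine summable_of_sum_range_le (c := u 0 - B) ha fun n => ?_
  calc ∑ l ∈ Finset.range n, a l ≤ ∑ l ∈ Finset.range n, (u l - u (l + 1)) :=
        Finset.sum_le_sum fun l _ => hdecr l
    _ = u 0 - u n := Finset.sum_range_sub' u n
    _ ≤ u 0 - B := by linarith [hB (Set.mem_range_self n)]

theorem tendsto_zero_of_summable_norm_sq {E : Type*} [SeminormedAddCommGroup E] {g : ℕ → E}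
    (hg : Summable fun l => ‖g l‖ ^ 2) : Tendsto g atTop (𝓝 0) := by
  rw [tendsto_zero_iff_norm_tendsto_zero]
  simpa [Real.sqrt_sq (norm_nonneg _)] using hg.tendsto_atTop_zero.sqrt

theorem MapClusterPt.eq_of_tendsto_comp {X Y α : Type*} [TopologicalSpace X] [TopologicalSpace Y]
    [T2Space Y] {l : Filter α} {u : α → X} {x : X} {F : X → Y} {y : Y} (hx : MapClusterPt x l u)
    (hF : ContinuousAt F x) (hlim : Tendsto (F ∘ u) l (𝓝 y)) : F x = y :=
  eq_of_nhds_neBot ((hx.continuousAt_comp hF).clusterPt.mono hlim).neBot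

theorem stmt_10 {E : Type*} [NormedAddCommGroup E] [InnerProductSpace ℝ E] [CompleteSpace E]
    (f : E → ℝ) (hf : ContDiff ℝ 2 f) (hbdd : BddBelow (Set.range f))
    (μ : ℝ) (hμ : 0 < μ) (hbound : ∀ z : E, ‖iteratedFDeriv ℝ 2 f z‖ ≤ μ)
    (ε : ℝ) (hε₀ : 0 < ε) (hε₁ : ε < 2 / μ)
    (x : ℕ → E) (hx : ∀ l : ℕ, x (l + 1) = x l - ε • gradient f (x l)) :
    Summable (fun l : ℕ => ‖gradient f (x l)‖ ^ 2) ∧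
      Tendsto (fun l : ℕ => gradient f (x l)) atTop (𝓝 0) ∧
      ∀ y : E, MapClusterPt y atTop x → gradient f y = 0 := by
  have hlip := lipschitzWith_fderiv_of_norm_iteratedFDeriv_two_le hf (C := ⟨μ, hμ.le⟩) hbound
  have hrate : 0 < ε * (1 - μ * ε / 2) := by
    have : μ * ε < 2 := by rwa [lt_div_iff₀ hμ, mul_comm] at hε₁
    nlinarith
  have hsum : Summable fun l => ‖gradient f (x l)‖ ^ 2 := by
    refine (summable_mul_left_iff hrate.ne').1 <|
      summable_of_le_sub_succ_of_bddBelow (u := f ∘ x) (fun l => by positivity)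
        (hbdd.mono (Set.range_comp_subset_range x f)) fun l => ?_
    have hstep := le_sub_mul_norm_sq_gradient_of_lipschitzWith_fderiv
      (hf.differentiable two_ne_zero) hlip (x l) ε
    change _ ≤ f (x l) - ε * (1 - μ * ε / 2) * _ at hstep
    simp only [Function.comp_apply, hx l]
    linarith
  have hlim := tendsto_zero_of_summable_norm_sq hsum
  exact ⟨hsum, hlim, fun y hy =>
    hy.eq_of_tendsto_comp ((hf.continuous_gradient two_ne_zero).continuousAt) hlim⟩
end

section
/- Let (M, d) be a metric space, V a finite vertex type, G a connected simple graph on V, and D a natural number such that the graph distance in G between any two vertices is at most D. For x : V → M let φ(x) = (1/2) · Σ over unordered edges {i,j} of G of d(x i, x j)². Then for all vertices p, q ∈ V, d(x p, x q)² ≤ 2·D·φ(x). -/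
theorem stmt_12 {M : Type*} [MetricSpace M] {V : Type*} [Fintype V] [DecidableEq V]
    (G : SimpleGraph V) [DecidableRel G.Adj] (hG : G.Connected)
    (D : ℕ) (hD : ∀ p q : V, G.dist p q ≤ D)
    (φ : (V → M) → ℝ)
    (hφ : ∀ x : V → M, φ x = (1 / 2) * ∑ e ∈ G.edgeFinset,
      Sym2.lift ⟨fun i j => dist (x i) (x j) ^ 2, fun i j => by simp [dist_comm]⟩ e)
    (x : V → M) :
    ∀ p q : V, dist (x p) (x q) ^ 2 ≤ 2 * (D : ℝ) * φ x := by
  intro p q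
  set f : Sym2 V → ℝ := Sym2.lift ⟨fun i j => dist (x i) (x j), fun i j => by simp [dist_comm]⟩
    with hf
  set F : Sym2 V → ℝ :=
    Sym2.lift ⟨fun i j => dist (x i) (x j) ^ 2, fun i j => by simp [dist_comm]⟩ with hF
  have hFf : ∀ e : Sym2 V, F e = f e ^ 2 := by
    intro e; induction e using Sym2.ind with
    | _ i j => simp [hf, hF]
  have hFnn : ∀ e : Sym2 V, 0 ≤ F e := fun e => by rw [hFf]; positivity
  -- walk lemma
  have key : ∀ {u v : V} (w : G.Walk u v), dist (x u) (x v) ≤ (w.edges.map f).sum := by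
    intro u v w
    induction w with
    | nil => simp
    | @cons a b c h w ih =>
      simp only [SimpleGraph.Walk.edges_cons, List.map_cons, List.sum_cons]
      calc dist (x a) (x c) ≤ dist (x a) (x b) + dist (x b) (x c) := dist_triangle _ _ _
        _ ≤ f s(a, b) + (w.edges.map f).sum := by
            apply add_le_add _ ih; simp [hf]
  obtain ⟨w, hwp, hwl⟩ := hG.exists_path_of_dist p q
  have hnd : w.edges.Nodup := hwp.edges_nodup
  set s : Finset (Sym2 V) := w.edges.toFinset with hs
  have hsum : ∑ e ∈ s, f e = (w.edges.map f).sum := List.sum_toFinset f hnd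
  have hcard : s.card ≤ D := by
    rw [hs, List.toFinset_card_of_nodup hnd, SimpleGraph.Walk.length_edges, hwl]
    exact hD p q
  have hsub : s ⊆ G.edgeFinset := by
    intro e he
    rw [hs, List.mem_toFinset] at he
    exact SimpleGraph.mem_edgeFinset.mpr (w.edges_subset_edgeSet he)
  have h1 : dist (x p) (x q) ^ 2 ≤ (∑ e ∈ s, f e) ^ 2 := by
    rw [hsum]
    apply pow_le_pow_left₀ dist_nonneg (key w)
  have h2 : (∑ e ∈ s, f e) ^ 2 ≤ (s.card : ℝ) * ∑ e ∈ s, f e ^ 2 := by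
    exact_mod_cast sq_sum_le_card_mul_sum_sq (s := s) (f := f)
  have h3 : ∑ e ∈ s, f e ^ 2 ≤ ∑ e ∈ G.edgeFinset, F e := by
    simp_rw [← hFf]
    exact Finset.sum_le_sum_of_subset_of_nonneg hsub fun e _ _ => hFnn e
  have hFsum : 0 ≤ ∑ e ∈ s, f e ^ 2 := Finset.sum_nonneg fun e _ => by positivity
  calc dist (x p) (x q) ^ 2 ≤ (s.card : ℝ) * ∑ e ∈ s, f e ^ 2 := h1.trans h2
    _ ≤ (D : ℝ) * ∑ e ∈ G.edgeFinset, F e := by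
        apply mul_le_mul (by exact_mod_cast hcard) h3 hFsum (Nat.cast_nonneg D)
    _ = 2 * (D : ℝ) * φ x := by rw [hφ x]; ring
end

section
/- Let (M, d) be a metric space, V a finite nonempty vertex type, G a connected simple graph on V, and D ≥ 1 a natural number such that the graph distance in G between any two vertices is at most D. Let r > 0 and let x : V → M satisfy φ(x) < r²/(2·D), where φ(x) = (1/2) · Σ over unordered edges {i,j} of G of d(x i, x j)². Then there exists y ∈ M such that d(x i, y) < r for every i ∈ V. -/
/-!
Fix a vertex `i₀` and take `y = x i₀`. A shortest path from `i` to `i₀` has at most `D` edges, all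
distinct, so the triangle inequality along it and Cauchy–Schwarz give
`d(x i, x i₀)² ≤ D · ∑_{e ∈ E} d_e² = 2 D φ(x) < r²`.
-/

theorem SimpleGraph.Walk.IsTrail.sq_sum_edges_le {V : Type*} [Fintype V] [DecidableEq V]
    {G : SimpleGraph V} [DecidableRel G.Adj] {u v : V} {p : G.Walk u v} (hp : p.IsTrail)
    (w : Sym2 V → ℝ) :
    (p.edges.map w).sum ^ 2 ≤ p.length * ∑ e ∈ G.edgeFinset, w e ^ 2 := by
  have hsub : p.edges.toFinset ⊆ G.edgeFinset := fun e he =>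
    mem_edgeFinset.mpr (p.edges_subset_edgeSet (List.mem_toFinset.mp he))
  calc (p.edges.map w).sum ^ 2 = (∑ e ∈ p.edges.toFinset, w e) ^ 2 := by
        rw [List.sum_toFinset w hp.edges_nodup]
    _ ≤ p.edges.toFinset.card * ∑ e ∈ p.edges.toFinset, w e ^ 2 := sq_sum_le_card_mul_sum_sq
    _ ≤ p.length * ∑ e ∈ G.edgeFinset, w e ^ 2 := by
        rw [List.toFinset_card_of_nodup hp.edges_nodup, Walk.length_edges]
        gcongr

section EdgeDist

variable {V M : Type*} [PseudoMetricSpace M] {G : SimpleGraph V}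

def edgeDist (x : V → M) : Sym2 V → ℝ :=
  Sym2.lift ⟨fun i j => dist (x i) (x j), fun _ _ => dist_comm _ _⟩

@[simp]
theorem edgeDist_mk (x : V → M) (i j : V) : edgeDist x s(i, j) = dist (x i) (x j) := rfl

theorem dist_le_sum_edgeDist (x : V → M) :
    ∀ {u v : V} (p : G.Walk u v), dist (x u) (x v) ≤ (p.edges.map (edgeDist x)).sum
  | _, _, .nil => by simp
  | u, v, .cons (v := w) _ q => by
    simp only [SimpleGraph.Walk.edges_cons, List.map_cons, List.sum_cons, edgeDist_mk]
    calc dist (x u) (x v) ≤ dist (x u) (x w) + dist (x w) (x v) := dist_triangle _ _ _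
      _ ≤ _ := by gcongr; exact dist_le_sum_edgeDist x q

theorem dist_sq_le_graphDist_mul_sum_edgeDist_sq [Fintype V] [DecidableEq V]
    [DecidableRel G.Adj] (x : V → M) {u v : V} (huv : G.Reachable u v) :
    dist (x u) (x v) ^ 2 ≤ G.dist u v * ∑ e ∈ G.edgeFinset, edgeDist x e ^ 2 := by
  obtain ⟨p, hp⟩ := huv.exists_walk_length_eq_dist
  calc dist (x u) (x v) ^ 2 ≤ (p.edges.map (edgeDist x)).sum ^ 2 := by
        gcongr; exact dist_le_sum_edgeDist x p
    _ ≤ G.dist u v * ∑ e ∈ G.edgeFinset, edgeDist x e ^ 2 :=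
        hp ▸ (p.isPath_of_length_eq_dist hp).isTrail.sq_sum_edges_le (edgeDist x)

end EdgeDist

theorem stmt_13 {M : Type*} [MetricSpace M] {V : Type*} [Fintype V] [Nonempty V]
    [DecidableEq V] (G : SimpleGraph V) [DecidableRel G.Adj] (hG : G.Connected)
    (D : ℕ) (hD : ∀ p q : V, G.dist p q ≤ D)
    (r : ℝ) (hr : 0 < r)
    (φ : (V → M) → ℝ)
    (hφ : ∀ x : V → M, φ x = (1 / 2) * ∑ e ∈ G.edgeFinset,
      Sym2.lift ⟨fun i j => dist (x i) (x j) ^ 2, fun i j => by simp [dist_comm]⟩ e)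
    (x : V → M) (hx : φ x < r ^ 2 / (2 * (D : ℝ))) :
    ∃ y : M, ∀ i : V, dist (x i) y < r := by
  set S := ∑ e ∈ G.edgeFinset, edgeDist x e ^ 2
  have hφS : φ x = S / 2 := by
    rw [hφ, one_div_mul_eq_div]
    congr 2 with e
    induction e using Sym2.inductionOn with
    | hf i j => rfl
  have hDS : D * S < r ^ 2 := by
    rcases Nat.eq_zero_or_pos D with hD₀ | hD₀
    · simpa [hD₀] using pow_pos hr 2
    · rw [hφS, lt_div_iff₀ (by positivity)] at hx
      linarith
  obtain ⟨i₀⟩ := ‹Nonempty V›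
  refine ⟨x i₀, fun i => lt_of_pow_lt_pow_left₀ 2 hr.le ?_⟩
  calc dist (x i) (x i₀) ^ 2 ≤ G.dist i i₀ * S :=
        dist_sq_le_graphDist_mul_sum_edgeDist_sq x (hG i i₀)
    _ ≤ D * S := by gcongr; exact_mod_cast hD i i₀
    _ < r ^ 2 := hDS
end
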